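/- Let A and B be p x p real symmetric positive definite matrices and v in R^p. Then tr(A^{-1} B) + v^T A^{-1} v - p + log det( A B^{-1} ) >= v^T ( I_p + A )^{-1} v. In particular, twice the Kullback-Leibler divergence between two p-dimensional Gaussian distributions with mean difference v, where A is the covariance of the reference (denominator) distribution and B that of the other, is at least v^T ( I_p + A )^{-1} v. -/

import Mathlib

open Matrix

noncomputable section

/-! Writing `A⁻¹ = Yᴴ Y`, the matrix `A⁻¹ B` has the trace and determinant of the positive definite
`C = Y B Yᴴ`, so `tr(A⁻¹ B) - p + log det(A B⁻¹) = ∑ (λᵢ - log λᵢ - 1) ≥ 0` over the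
eigenvalues `λᵢ` of `C`, since `log x ≤ x - 1`. The mean term is handled by the Loewner inequality
`(1 + A)⁻¹ ≤ A⁻¹`, whose difference `A⁻¹ - (1 + A)⁻¹ = ((1 + A) A)⁻¹` is positive definite. -/

/-- The Kullback–Leibler divergence `KL_{k,k'}` of `N(μk, Sk)` with respect to `N(μk', Sk')`. -/
def klDiv {n : Type*} [Fintype n] [DecidableEq n] (μk μk' : n → ℝ)
    (Sk Sk' : Matrix n n ℝ) : ℝ :=
  (1 / 2) * ((Sk'⁻¹ * Sk).trace + ((μk - μk') ⬝ᵥ (Sk'⁻¹ *ᵥ (μk - μk')))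
    - (Fintype.card n : ℝ) + Real.log (Sk' * Sk⁻¹).det)

namespace Matrix

variable {n : Type*} [Fintype n] [DecidableEq n]

theorem PosDef.card_add_log_det_le_trace {C : Matrix n n ℝ} (hC : C.PosDef) :
    (Fintype.card n : ℝ) + Real.log C.det ≤ C.trace := by
  set μ := hC.1.eigenvalues
  have hlog : Real.log C.det = ∑ i, Real.log (μ i) := by
    rw [hC.1.det_eq_prod_eigenvalues]
    exact Real.log_prod fun i _ ↦ (hC.eigenvalues_pos i).ne'
  calc (Fintype.card n : ℝ) + Real.log C.det = ∑ i, (1 + Real.log (μ i)) := by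
        simp [hlog, Finset.sum_add_distrib]
    _ ≤ ∑ i, μ i := Finset.sum_le_sum fun i _ ↦ by
        linarith [Real.log_le_sub_one_of_pos (hC.eigenvalues_pos i)]
    _ = C.trace := by simp [hC.1.trace_eq_sum_eigenvalues, μ]

theorem PosDef.card_add_log_det_inv_mul_le_trace {A B : Matrix n n ℝ} (hA : A.PosDef)
    (hB : B.PosDef) :
    (Fintype.card n : ℝ) + Real.log (A⁻¹ * B).det ≤ (A⁻¹ * B).trace := by
  open scoped MatrixOrder in
  obtain ⟨Y, hY, hAY⟩ :=
    CStarAlgebra.isStrictlyPositive_iff_eq_star_mul_self.mp hA.inv.isStrictlyPositive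
  have hC : (Y * B * star Y).PosDef := (hY.posDef_star_right_conjugate_iff).mpr hB
  have htrace : (A⁻¹ * B).trace = (Y * B * star Y).trace := by
    rw [hAY, mul_assoc, trace_mul_comm, mul_assoc]
  have hdet : (A⁻¹ * B).det = (Y * B * star Y).det := by
    rw [hAY, mul_assoc, det_mul_comm, mul_assoc]
  rw [htrace, hdet]
  exact hC.card_add_log_det_le_trace

theorem det_mul_inv_eq_inv_det_inv_mul {K : Type*} [Field K] (A B : Matrix n n K) :
    (A * B⁻¹).det = (A⁻¹ * B).det⁻¹ := by
  simp [det_mul, det_nonsing_inv, mul_comm]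

theorem PosDef.dotProduct_inv_one_add_mulVec_le {A : Matrix n n ℝ} (hA : A.PosDef) (v : n → ℝ) :
    v ⬝ᵥ ((1 + A)⁻¹ *ᵥ v) ≤ v ⬝ᵥ (A⁻¹ *ᵥ v) := by
  have hsub : A⁻¹ - (1 + A)⁻¹ = ((1 + A) * A)⁻¹ := by
    rw [inv_sub_inv (iff_of_true hA.isUnit (PosDef.one.add hA).isUnit), add_sub_cancel_right,
      mul_one, mul_inv_rev]
  have hpos : ((1 + A) * A)⁻¹.PosDef := by
    rw [add_mul, one_mul]
    have hAA : (A * A).PosSemidef := by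
      simpa only [hA.1.eq] using posSemidef_self_mul_conjTranspose A
    exact (hA.add_posSemidef hAA).inv
  rw [← sub_nonneg, ← dotProduct_sub, ← sub_mulVec, hsub]
  simpa using hpos.posSemidef.dotProduct_mulVec_nonneg v

end Matrix

/-- For `p × p` symmetric positive definite `A, B` and `v ∈ ℝ^p`:
`tr(A⁻¹ B) + vᵀ A⁻¹ v - p + log det(A B⁻¹) ≥ vᵀ (I + A)⁻¹ v`. In particular, twice the KL
divergence between two Gaussians with mean difference `v`, where `A` is the covariance of the
reference (denominator) distribution and `B` that of the other, is at least `vᵀ (I + A)⁻¹ v`. -/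
theorem kl_lower_bound
    (p : ℕ) (A B : Matrix (Fin p) (Fin p) ℝ) (hA : A.PosDef) (hB : B.PosDef)
    (v : Fin p → ℝ) :
    v ⬝ᵥ ((1 + A)⁻¹ *ᵥ v) ≤
      (A⁻¹ * B).trace + (v ⬝ᵥ (A⁻¹ *ᵥ v)) - (p : ℝ) + Real.log (A * B⁻¹).det ∧
    ∀ μk μk' : Fin p → ℝ, μk - μk' = v →
      v ⬝ᵥ ((1 + A)⁻¹ *ᵥ v) ≤ 2 * klDiv μk μk' B A := by
  have hlogdet : Real.log (A * B⁻¹).det = -Real.log (A⁻¹ * B).det := by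
    rw [det_mul_inv_eq_inv_det_inv_mul, Real.log_inv]
  have htrace := hA.card_add_log_det_inv_mul_le_trace hB
  have hquad := hA.dotProduct_inv_one_add_mulVec_le v
  rw [Fintype.card_fin] at htrace
  have hmain : v ⬝ᵥ ((1 + A)⁻¹ *ᵥ v) ≤
      (A⁻¹ * B).trace + (v ⬝ᵥ (A⁻¹ *ᵥ v)) - (p : ℝ) + Real.log (A * B⁻¹).det := by
    linarith
  refine ⟨hmain, fun μk μk' hv ↦ hmain.trans_eq ?_⟩
  simp only [klDiv, hv, Fintype.card_fin]
  ring

end
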